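/- Let n ≥ 2 and K ⊆ J ⊆ [n-1]. Then X(Σ)_{K,J;≥0} equals the set of classes [x;y] ∈ X(Σ) admitting a representative (x;y) with x_i = 0 for i ∈ K, x_i a positive real number for i ∉ K, y_i = 0 for i ∉ J, and y_i = 1 for i ∈ J. -/

import Mathlib

open Matrix

attribute [local instance] Classical.propDecidable

noncomputable section

namespace PetersonPaper

/-- `ℂ^{2(n-1)}` with coordinates `(x_1,…,x_{n-1}; y_1,…,y_{n-1})`. -/
abbrev C2 (n : ℕ) := (Fin (n-1) → ℂ) × (Fin (n-1) → ℂ)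

/-- The complement `ℂ^{2(n-1)} - E` of the exceptional locus: for every `i`,
`(x_i, y_i) ≠ (0,0)`. -/
def goodSet (n : ℕ) : Set (C2 n) := { p | ∀ i, p.1 i ≠ 0 ∨ p.2 i ≠ 0 }

/-- The maximal torus `T ⊆ SL_n(ℂ)` of diagonal matrices, recorded by its diagonal
entries `(t_1,…,t_n)` with `∏ t_i = 1`. -/
def TGrp (n : ℕ) : Type := { t : Fin n → ℂ // ∏ i, t i = 1 }

/-- The fundamental weight `ϖ_i(t) = t_1 t_2 ⋯ t_i` (1-based; `i : Fin (n-1)`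
encodes `i.1+1`). -/
def varpi (n : ℕ) (t : TGrp n) (i : Fin (n-1)) : ℂ :=
  ∏ k : Fin n, if (k : ℕ) ≤ (i : ℕ) then t.1 k else 1

/-- The simple root `α_i(t) = t_i t_{i+1}⁻¹` (1-based; `i : Fin (n-1)` encodes
`i.1+1`). -/
def alphaR (n : ℕ) (t : TGrp n) (i : Fin (n-1)) : ℂ :=
  t.1 ⟨i.1, by have := i.isLt; omega⟩ * (t.1 ⟨i.1 + 1, by have := i.isLt; omega⟩)⁻¹

/-- The `T`-action `t • (x; y) = (ϖ_i(t) x_i; α_i(t) y_i)`. -/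
def actT (n : ℕ) (t : TGrp n) (p : C2 n) : C2 n :=
  (fun i => varpi n t i * p.1 i, fun i => alphaR n t i * p.2 i)

/-- The orbit relation of the `T`-action on `ℂ^{2(n-1)} - E`. -/
def XRel (n : ℕ) (p q : goodSet n) : Prop := ∃ t : TGrp n, actT n t ↑p = (↑q : C2 n)

/-- The toric variety `X(Σ) = (ℂ^{2(n-1)} - E)/T`, with the quotient topology. -/
def XSig (n : ℕ) := Quot (XRel n)

noncomputable instance (n : ℕ) : TopologicalSpace (XSig n) :=
  inferInstanceAs (TopologicalSpace (Quot (XRel n)))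

/-- The class `[x; y] ∈ X(Σ)` of a point of `ℂ^{2(n-1)} - E`. -/
def XMk (n : ℕ) (p : goodSet n) : XSig n := Quot.mk (XRel n) p

/-- The torus orbit `X(Σ)_{K,J}`: classes `[x;y]` with `x_i = 0` iff `i ∈ K` and
`y_i ≠ 0` iff `i ∈ J`. -/
def XKJ (n : ℕ) (K J : Set (Fin (n-1))) : Set (XSig n) :=
  { z | ∃ p : goodSet n, XMk n p = z ∧
      (∀ i, (p : C2 n).1 i = 0 ↔ i ∈ K) ∧ (∀ i, (p : C2 n).2 i ≠ 0 ↔ i ∈ J) }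

/-- The nonnegative part `X(Σ)_{≥0}`: classes with a representative all of whose
coordinates are real and nonnegative. -/
def Xge0 (n : ℕ) : Set (XSig n) :=
  { z | ∃ p : goodSet n, XMk n p = z ∧
      ∀ i, ((p : C2 n).1 i).im = 0 ∧ 0 ≤ ((p : C2 n).1 i).re ∧
        ((p : C2 n).2 i).im = 0 ∧ 0 ≤ ((p : C2 n).2 i).re }

/-- `X(Σ)_{K,J;≥0} = X(Σ)_{K,J} ∩ X(Σ)_{≥0}`. -/
def XKJge0 (n : ℕ) (K J : Set (Fin (n-1))) : Set (XSig n) := XKJ n K J ∩ Xge0 n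

/-!
Since the characters `ϖ_i` and `α_i` never vanish on `T`, every representative of a class in
`X(Σ)_{K,J}` has the zero pattern `(K, J)`; a nonnegative one thus has `x_i > 0` off `K` and
`y_i > 0` on `J`. The positive real points of `T` realise every positive value of
`(α_1, …, α_{n-1})` (up to an `n`-th root, `t_k = ∏_{j ≥ k} c_j` will do), so some such `t` has
`α_i(t) = y_i⁻¹` on `J`, and it moves the representative into the normal form while keeping
`x` positive.
-/

end PetersonPaper

open scoped ComplexOrder

lemma Complex.pos_iff_exists_ofReal {z : ℂ} : 0 < z ↔ ∃ r : ℝ, 0 < r ∧ z = r :=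
  ⟨fun hz => ⟨z.re, (Complex.pos_iff.mp hz).1,
      Complex.eq_re_of_ofReal_le (r := 0) (by simpa using hz.le)⟩,
    fun ⟨_, hr, hz⟩ => hz ▸ Complex.zero_lt_real.mpr hr⟩

lemma Real.exists_pos_prod_mul_eq_one {ι : Type*} [Fintype ι] (u : ι → ℝ) (hu : ∀ k, 0 < u k) :
    ∃ s : ℝ, 0 < s ∧ ∏ k, s * u k = 1 := by
  rcases (Fintype.card ι).eq_zero_or_pos with hι | hι
  · have := Fintype.card_eq_zero_iff.mp hι
    exact ⟨1, one_pos, Finset.prod_of_isEmpty _⟩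
  have hP : 0 < ∏ k, u k := Finset.prod_pos fun k _ => hu k
  refine ⟨(∏ k, u k)⁻¹ ^ ((Fintype.card ι : ℝ)⁻¹), by positivity, ?_⟩
  rw [Finset.prod_mul_distrib, Finset.prod_const, Finset.card_univ,
    Real.rpow_inv_natCast_pow (inv_nonneg.mpr hP.le) hι.ne', inv_mul_cancel₀ hP.ne']

namespace PetersonPaper

lemma TGrp.ne_zero {n : ℕ} (t : TGrp n) (k : Fin n) : t.1 k ≠ 0 := by
  intro h
  simpa [Finset.prod_eq_zero (Finset.mem_univ k) h] using t.2

lemma varpi_ne_zero {n : ℕ} (t : TGrp n) (i : Fin (n-1)) : varpi n t i ≠ 0 :=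
  Finset.prod_ne_zero_iff.mpr fun k _ => by split_ifs; exacts [t.ne_zero k, one_ne_zero]

lemma alphaR_ne_zero {n : ℕ} (t : TGrp n) (i : Fin (n-1)) : alphaR n t i ≠ 0 :=
  mul_ne_zero (t.ne_zero _) (inv_ne_zero (t.ne_zero _))

lemma varpi_pos {n : ℕ} {t : TGrp n} (ht : ∀ k, 0 < t.1 k) (i : Fin (n-1)) :
    0 < varpi n t i :=
  Finset.prod_pos fun k _ => by split_ifs; exacts [ht k, one_pos]

lemma actT_mem_goodSet {n : ℕ} (t : TGrp n) {p : C2 n} (hp : p ∈ goodSet n) :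
    actT n t p ∈ goodSet n := fun i =>
  (hp i).imp (mul_ne_zero (varpi_ne_zero t i)) (mul_ne_zero (alphaR_ne_zero t i))

/-- The index `(K, J)` of the stratum `X(Σ)_{K,J}` containing the class of `p`. -/
def stratum {n : ℕ} (p : C2 n) : Set (Fin (n-1)) × Set (Fin (n-1)) :=
  ({i | p.1 i = 0}, {i | p.2 i ≠ 0})

lemma stratum_eq_iff {n : ℕ} {p : C2 n} {K J : Set (Fin (n-1))} :
    stratum p = (K, J) ↔ (∀ i, p.1 i = 0 ↔ i ∈ K) ∧ (∀ i, p.2 i ≠ 0 ↔ i ∈ J) := by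
  simp only [stratum, Prod.ext_iff, Set.ext_iff, Set.mem_ofPred_eq]

lemma stratum_actT {n : ℕ} (t : TGrp n) (p : C2 n) : stratum (actT n t p) = stratum p := by
  simp [stratum, actT, varpi_ne_zero, alphaR_ne_zero]

lemma stratum_eq_of_XMk_eq {n : ℕ} {p q : goodSet n} (h : XMk n p = XMk n q) :
    stratum (p : C2 n) = stratum (q : C2 n) :=
  congrArg (Quot.lift (fun p : goodSet n => stratum (p : C2 n))
    fun _ _ ⟨t, ht⟩ => by rw [← ht, stratum_actT]) h

lemma XMk_mem_XKJ_iff {n : ℕ} {K J : Set (Fin (n-1))} (q : goodSet n) :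
    XMk n q ∈ XKJ n K J ↔ stratum (q : C2 n) = (K, J) := by
  refine ⟨fun ⟨p, hpq, hp⟩ => ?_, fun hq => ⟨q, rfl, stratum_eq_iff.mp hq⟩⟩
  rw [← stratum_eq_of_XMk_eq hpq, stratum_eq_iff]
  exact hp

lemma Xge0_eq (n : ℕ) :
    Xge0 n =
      { z | ∃ p : goodSet n, XMk n p = z ∧ ∀ i, 0 ≤ (p : C2 n).1 i ∧ 0 ≤ (p : C2 n).2 i } := by
  simp only [Xge0, Complex.nonneg_iff, eq_comm (a := (0 : ℝ)), and_comm, and_assoc]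

lemma exists_torus_pos_alphaR_eq {n : ℕ} (c : Fin (n-1) → ℝ) (hc : ∀ i, 0 < c i) :
    ∃ t : TGrp n, (∀ k, 0 < t.1 k) ∧ ∀ i, alphaR n t i = c i := by
  set u : Fin n → ℝ := fun k => ∏ j : Fin (n-1), if (k : ℕ) ≤ j then c j else 1
  have hu : ∀ k, 0 < u k := fun k =>
    Finset.prod_pos fun j _ => by split_ifs; exacts [hc j, one_pos]
  have hu_succ : ∀ (i : Fin (n-1)) (h₀ : i.1 < n) (h₁ : i.1 + 1 < n),
      u ⟨i, h₀⟩ = c i * u ⟨i + 1, h₁⟩ := by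
    intro i _ _
    rw [show c i = ∏ j, if i = j then c j else 1 by simp, ← Finset.prod_mul_distrib]
    refine Finset.prod_congr rfl fun j _ => ?_
    dsimp only
    by_cases hij : i = j
    · subst hij
      simp
    · have hij' : (i : ℕ) ≠ j := Fin.val_ne_of_ne hij
      rw [if_neg hij, one_mul]
      split_ifs <;> first | rfl | omega
  obtain ⟨s, hs, hsu⟩ := Real.exists_pos_prod_mul_eq_one u hu
  refine ⟨⟨fun k => ((s * u k : ℝ) : ℂ), by rw [← Complex.ofReal_prod, hsu, Complex.ofReal_one]⟩,
    fun k => Complex.zero_lt_real.mpr (mul_pos hs (hu k)), fun i => ?_⟩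
  have h₁ : i.1 + 1 < n := by omega
  simp only [alphaR]
  rw [← Complex.ofReal_inv, ← Complex.ofReal_mul, Complex.ofReal_inj, hu_succ i (by omega) h₁]
  field_simp [(hu _).ne']

lemma exists_varpi_pos_alphaR_mul_eq_one {n : ℕ} (y : Fin (n-1) → ℂ) (hy : ∀ i, 0 ≤ y i) :
    ∃ t : TGrp n, (∀ i, 0 < varpi n t i) ∧ ∀ i, y i ≠ 0 → alphaR n t i * y i = 1 := by
  have hy_pos : ∀ i, y i ≠ 0 → 0 < (y i).re := fun i hi =>
    (Complex.pos_iff.mp (lt_of_le_of_ne (hy i) hi.symm)).1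
  obtain ⟨t, ht, hα⟩ := exists_torus_pos_alphaR_eq
    (fun i => if y i = 0 then 1 else (y i).re⁻¹)
    fun i => by split_ifs with hi; exacts [one_pos, inv_pos.mpr (hy_pos i hi)]
  refine ⟨t, varpi_pos ht, fun i hi => ?_⟩
  rw [hα, if_neg hi, Complex.eq_re_of_ofReal_le (hy i), ← Complex.ofReal_mul, Complex.ofReal_re,
    inv_mul_cancel₀ (hy_pos i hi).ne', Complex.ofReal_one]

lemma XMk_mem_XKJge0 {n : ℕ} {K J : Set (Fin (n-1))} (p : goodSet n)
    (hK : ∀ i ∈ K, (p : C2 n).1 i = 0) (hKpos : ∀ i ∉ K, 0 < (p : C2 n).1 i)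
    (hJ0 : ∀ i ∉ J, (p : C2 n).2 i = 0) (hJ1 : ∀ i ∈ J, (p : C2 n).2 i = 1) :
    XMk n p ∈ XKJge0 n K J := by
  rw [XKJge0, Xge0_eq]
  refine ⟨(XMk_mem_XKJ_iff p).mpr (stratum_eq_iff.mpr ⟨fun i => ?_, fun i => ?_⟩),
    p, rfl, fun i => ⟨?_, ?_⟩⟩
  · exact ⟨fun h => by_contra fun hi => (hKpos i hi).ne' h, hK i⟩
  · exact ⟨fun h => by_contra fun hi => h (hJ0 i hi), fun hi => by simp [hJ1 i hi]⟩
  · by_cases hi : i ∈ K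
    exacts [(hK i hi).ge, (hKpos i hi).le]
  · by_cases hi : i ∈ J
    · simp [hJ1 i hi]
    · simp [hJ0 i hi]

theorem XKJ_nonneg_description
    (n : ℕ) (K J : Set (Fin (n-1))) :
    XKJge0 n K J =
      { z : XSig n | ∃ p : goodSet n, XMk n p = z ∧
          (∀ i, i ∈ K → (p : C2 n).1 i = 0) ∧
          (∀ i, i ∉ K → ∃ r : ℝ, 0 < r ∧ (p : C2 n).1 i = (r : ℂ)) ∧
          (∀ i, i ∉ J → (p : C2 n).2 i = 0) ∧
          (∀ i, i ∈ J → (p : C2 n).2 i = 1) } := by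
  ext z
  constructor
  · rintro ⟨hzKJ, hz⟩
    rw [Xge0_eq] at hz
    obtain ⟨q, rfl, hq⟩ := hz
    obtain ⟨hqK, hqJ⟩ := stratum_eq_iff.mp ((XMk_mem_XKJ_iff q).mp hzKJ)
    obtain ⟨t, hϖ, hα⟩ := exists_varpi_pos_alphaR_mul_eq_one _ fun i => (hq i).2
    refine ⟨⟨actT n t q, actT_mem_goodSet t q.2⟩, (Quot.sound ⟨t, rfl⟩).symm,
      fun i hi => ?_, fun i hi => ?_, fun i hi => ?_, fun i hi => hα i ((hqJ i).mpr hi)⟩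
    · simp [actT, (hqK i).mpr hi]
    · exact Complex.pos_iff_exists_ofReal.mp
        (mul_pos (hϖ i) (lt_of_le_of_ne (hq i).1 (Ne.symm (mt (hqK i).mp hi))))
    · simp [actT, not_not.mp (mt (hqJ i).mp hi)]
  · rintro ⟨p, rfl, hK, hKpos, hJ0, hJ1⟩
    exact XMk_mem_XKJge0 p hK (fun i hi => Complex.pos_iff_exists_ofReal.mpr (hKpos i hi)) hJ0 hJ1

end PetersonPaper
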